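/- arXiv:1312.5082 — 2 statements merged into one kernel-verified Lean document; each statement's English description precedes it below -/
import Mathlib

section
/- Assume in addition that K is nonnegative and K(u) = 0 whenever |u| > 1, and that x and all the points x₁,…,x_m lie in a compact interval I. Then for every integer ℓ ≥ 0, |W_ℓ(x)| ≤ h² · Q · U₀(x), where Q = sup { |g''(s) − g''(t)| : s, t ∈ I, |s − t| ≤ h }. -/
open intervalIntegral Finset

/-- Scaled kernel `K_h(u) = K(u/h)/h`. -/
noncomputable def kernScaled (K : ℝ → ℝ) (h u : ℝ) : ℝ := K (u / h) / h

/-- `U_ℓ(x) = m⁻¹ Σᵢ ((x - xᵢ)/h)^ℓ K_h(x - xᵢ)`. -/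
noncomputable def Ustat (K : ℝ → ℝ) (h : ℝ) (m : ℕ) (X : Fin m → ℝ) (ℓ : ℕ) (x : ℝ) : ℝ :=
  (1 / (m : ℝ)) * ∑ i, ((x - X i) / h) ^ ℓ * kernScaled K h (x - X i)

/-- `W_ℓ(x) = (mh)⁻¹ Σᵢ [∫_x^{xᵢ} (g''(t) - g''(x))(xᵢ - t) dt] ((x - xᵢ)/h)^ℓ K((x - xᵢ)/h)`. -/
noncomputable def Wstat (K : ℝ → ℝ) (h : ℝ) (m : ℕ) (X : Fin m → ℝ) (g : ℝ → ℝ)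
    (ℓ : ℕ) (x : ℝ) : ℝ :=
  (1 / ((m : ℝ) * h)) * ∑ i,
    (∫ t in x..(X i), (deriv (deriv g) t - deriv (deriv g) x) * (X i - t)) *
      (((x - X i) / h) ^ ℓ * K ((x - X i) / h))

/-- The modulus of continuity of `g''` at scale `h` over the interval `I`:
`Q = sup { |g''(s) - g''(t)| : s, t ∈ I, |s - t| ≤ h }`. -/
noncomputable def modCont (g : ℝ → ℝ) (I : Set ℝ) (h : ℝ) : ℝ :=
  sSup {q : ℝ | ∃ s ∈ I, ∃ t ∈ I, |s - t| ≤ h ∧ q = |deriv (deriv g) s - deriv (deriv g) t|}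

/-- Bound on the Taylor-remainder component of the local linear estimator:
if `K ≥ 0` vanishes outside `[-1, 1]` and `x` and all design points lie in the compact
interval `I = [a, b]`, then `|W_ℓ(x)| ≤ h² Q U₀(x)` where
`Q = sup { |g''(s) - g''(t)| : s, t ∈ I, |s - t| ≤ h }`. -/
theorem Wstat_bound
    (K : ℝ → ℝ) (hKpos : ∀ u, 0 ≤ K u) (hKsupp : ∀ u, 1 < |u| → K u = 0)
    (h : ℝ) (hh : 0 < h) (m : ℕ) (X : Fin m → ℝ)
    (g : ℝ → ℝ) (hg : ContDiff ℝ 2 g)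
    (a b : ℝ) (hab : a ≤ b) (x : ℝ) (hx : x ∈ Set.Icc a b)
    (hX : ∀ i, X i ∈ Set.Icc a b) (ℓ : ℕ) :
    |Wstat K h m X g ℓ x|
      ≤ h ^ 2 * modCont g (Set.Icc a b) h * Ustat K h m X 0 x := by
  set g'' := deriv (deriv g) with hg''def
  -- continuity of g''
  have hcont : Continuous g'' := by
    have h0 : ContDiff ℝ (1+1 : ℕ) g := by exact_mod_cast hg
    have h1 : ContDiff ℝ 1 (deriv g) := (contDiff_succ_iff_deriv.mp h0).2.2
    exact h1.continuous_deriv le_rfl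
  obtain ⟨C, hC⟩ : ∃ C, ∀ y ∈ Set.Icc a b, ‖g'' y‖ ≤ C :=
    isCompact_Icc.exists_bound_of_continuousOn hcont.continuousOn
  set S := {q : ℝ | ∃ s ∈ Set.Icc a b, ∃ t ∈ Set.Icc a b, |s - t| ≤ h ∧ q = |g'' s - g'' t|}
    with hSdef
  have hbdd : BddAbove S := by
    refine ⟨C + C, ?_⟩
    rintro q ⟨s, hs, t, ht, -, rfl⟩
    calc |g'' s - g'' t| ≤ |g'' s| + |g'' t| := abs_sub _ _
      _ ≤ C + C := add_le_add (hC s hs) (hC t ht)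
  have hQeq : modCont g (Set.Icc a b) h = sSup S := rfl
  set Q := sSup S with hQdef
  have hQmem : ∀ s ∈ Set.Icc a b, ∀ t ∈ Set.Icc a b, |s - t| ≤ h → |g'' s - g'' t| ≤ Q :=
    fun s hs t ht hst => le_csSup hbdd ⟨s, hs, t, ht, hst, rfl⟩
  have hQ0 : 0 ≤ Q := by
    have := hQmem x hx x hx (by simp [hh.le])
    exact le_trans (abs_nonneg _) this
  -- termwise bound
  have key : ∀ i : Fin m,
      |(∫ t in x..(X i), (g'' t - g'' x) * (X i - t)) *
        (((x - X i) / h) ^ ℓ * K ((x - X i) / h))|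
      ≤ h ^ 2 * Q * K ((x - X i) / h) := by
    intro i
    set r := (x - X i) / h with hrdef
    by_cases hr : 1 < |r|
    · simp [hKsupp r hr]
    push_neg at hr
    have hxXi : |x - X i| ≤ h := by
      have : |x - X i| / h ≤ 1 := by rwa [hrdef, abs_div, abs_of_pos hh] at hr
      calc |x - X i| = |x - X i| / h * h := by field_simp
        _ ≤ 1 * h := by nlinarith [hh.le]
        _ = h := one_mul h
    have hint : |∫ t in x..(X i), (g'' t - g'' x) * (X i - t)| ≤ (Q * h) * |X i - x| := by
      rw [← Real.norm_eq_abs]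
      apply intervalIntegral.norm_integral_le_of_norm_le_const
      intro t ht
      have ht' : t ∈ Set.uIcc x (X i) := Set.uIoc_subset_uIcc ht
      rw [Set.mem_uIcc] at ht'
      obtain ⟨hx1, hx2⟩ := hx
      obtain ⟨hX1, hX2⟩ := hX i
      have hta : t ∈ Set.Icc a b := by
        rcases ht' with ⟨h1, h2⟩ | ⟨h1, h2⟩ <;> exact ⟨by linarith, by linarith⟩
      have htx : |t - x| ≤ h := by
        rw [abs_le]; rw [abs_le] at hxXi
        rcases ht' with ⟨h1, h2⟩ | ⟨h1, h2⟩ <;> constructor <;> linarith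
      have htXi : |X i - t| ≤ h := by
        rw [abs_le]; rw [abs_le] at hxXi
        rcases ht' with ⟨h1, h2⟩ | ⟨h1, h2⟩ <;> constructor <;> linarith
      rw [Real.norm_eq_abs, abs_mul]
      exact mul_le_mul (hQmem t hta x ⟨hx1, hx2⟩ htx) htXi (abs_nonneg _) hQ0
    have hXix : |X i - x| ≤ h := by rwa [abs_sub_comm] at hxXi
    have hrpow : |r ^ ℓ| ≤ 1 := by
      rw [abs_pow]; exact pow_le_one₀ (abs_nonneg _) hr
    have hKr : 0 ≤ K r := hKpos r
    calc |(∫ t in x..(X i), (g'' t - g'' x) * (X i - t)) * (r ^ ℓ * K r)|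
        = |∫ t in x..(X i), (g'' t - g'' x) * (X i - t)| * (|r ^ ℓ| * K r) := by
          rw [abs_mul, abs_mul, abs_of_nonneg hKr]
      _ ≤ ((Q * h) * h) * (1 * K r) := by
          apply mul_le_mul _ _ (by positivity) (by positivity)
          · exact hint.trans (mul_le_mul_of_nonneg_left hXix (by positivity))
          · exact mul_le_mul_of_nonneg_right hrpow hKr
      _ = h ^ 2 * Q * K r := by ring
  rw [Wstat, Ustat, hQeq]
  calc |1 / ((m : ℝ) * h) * ∑ i, (∫ t in x..(X i), (g'' t - g'' x) * (X i - t)) *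
          (((x - X i) / h) ^ ℓ * K ((x - X i) / h))|
      ≤ 1 / ((m : ℝ) * h) * ∑ i, h ^ 2 * Q * K ((x - X i) / h) := by
        rw [abs_mul, abs_of_nonneg (by positivity : (0:ℝ) ≤ 1 / ((m : ℝ) * h))]
        exact mul_le_mul_of_nonneg_left
          ((Finset.abs_sum_le_sum_abs _ _).trans (Finset.sum_le_sum fun i _ => key i))
          (by positivity)
    _ = h ^ 2 * Q * (1 / (m : ℝ) * ∑ i, ((x - X i) / h) ^ 0 * kernScaled K h (x - X i)) := by
        simp only [pow_zero, one_mul, kernScaled, Finset.mul_sum]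
        apply Finset.sum_congr rfl
        intro i _
        field_simp
end

section
/- Assume K is nonnegative, K(u) = 0 whenever |u| > 1, x and all the points x₁,…,x_m lie in a compact interval I, and U₂(x)·U₀(x) − U₁(x)² > 0. Define the local linear estimator ĝ(x) = (U₂(x)V₀(x) − U₁(x)V₁(x)) / (U₂(x)U₀(x) − U₁(x)²) and Δ(x) = (U₂(x)Δ₀(x) − U₁(x)Δ₁(x)) / (U₂(x)U₀(x) − U₁(x)²). Then |ĝ(x) − ( g(x) + (1/2)·h²·g''(x)·(U₂(x)² − U₁(x)U₃(x))/(U₂(x)U₀(x) − U₁(x)²) + Δ(x) )| ≤ 2·Q·h²·U₀(x)² / (U₂(x)U₀(x) − U₁(x)²), where Q = sup { |g''(s) − g''(t)| : s, t ∈ I, |s − t| ≤ h }. -/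
open intervalIntegral Finset

/-- `V_ℓ(x) = m⁻¹ Σᵢ yᵢ ((x - xᵢ)/h)^ℓ K_h(x - xᵢ)`. -/
noncomputable def Vstat (K : ℝ → ℝ) (h : ℝ) (m : ℕ) (X Y : Fin m → ℝ) (ℓ : ℕ) (x : ℝ) : ℝ :=
  (1 / (m : ℝ)) * ∑ i, Y i * (((x - X i) / h) ^ ℓ * kernScaled K h (x - X i))

/-- `Δ_ℓ(x) = (mh)⁻¹ Σᵢ εᵢ ((x - xᵢ)/h)^ℓ K((x - xᵢ)/h)`. -/
noncomputable def Dstat (K : ℝ → ℝ) (h : ℝ) (m : ℕ) (X ε : Fin m → ℝ) (ℓ : ℕ) (x : ℝ) : ℝ :=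
  (1 / ((m : ℝ) * h)) * ∑ i, ε i * (((x - X i) / h) ^ ℓ * K ((x - X i) / h))

/-- The local linear estimator `ĝ(x) = (U₂ V₀ - U₁ V₁)/(U₂ U₀ - U₁²)`. -/
noncomputable def locLin (K : ℝ → ℝ) (h : ℝ) (m : ℕ) (X Y : Fin m → ℝ) (x : ℝ) : ℝ :=
  (Ustat K h m X 2 x * Vstat K h m X Y 0 x - Ustat K h m X 1 x * Vstat K h m X Y 1 x) /
    (Ustat K h m X 2 x * Ustat K h m X 0 x - (Ustat K h m X 1 x) ^ 2)

/-- `Δ(x) = (U₂ Δ₀ - U₁ Δ₁)/(U₂ U₀ - U₁²)`. -/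
noncomputable def DeltaStat (K : ℝ → ℝ) (h : ℝ) (m : ℕ) (X ε : Fin m → ℝ) (x : ℝ) : ℝ :=
  (Ustat K h m X 2 x * Dstat K h m X ε 0 x - Ustat K h m X 1 x * Dstat K h m X ε 1 x) /
    (Ustat K h m X 2 x * Ustat K h m X 0 x - (Ustat K h m X 1 x) ^ 2)

/-!
Substituting `yᵢ = g(xᵢ) + εᵢ` and expanding `g` to second order at `x` splits each `V_ℓ` into
`g(x) U_ℓ - h g'(x) U_{ℓ+1} + ½ h² g''(x) U_{ℓ+2}`, the noise term `Δ_ℓ`, and a `V_ℓ`-statistic of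
the Taylor remainders; in `U₂V₀ - U₁V₁` the `g'(x)` terms cancel. Only points with `|x - xᵢ| ≤ h`
carry kernel weight, and there the mean value inequality (applied to `g'` and then to `g`) bounds
the remainder by `Q h²`. Hence both remainder statistics are at most `Q h² U₀`, and `|U₁|, |U₂| ≤ U₀`
gives the bound.
-/

open Set

noncomputable def taylorRem2 (f : ℝ → ℝ) (x t : ℝ) : ℝ :=
  f t - f x - deriv f x * (t - x) - deriv (deriv f) x / 2 * (t - x) ^ 2

lemma abs_taylorRem2_le {f : ℝ → ℝ} (hf : Differentiable ℝ f)
    (hf' : Differentiable ℝ (deriv f)) {x t C : ℝ}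
    (hC : ∀ s ∈ uIcc x t, |deriv (deriv f) s - deriv (deriv f) x| ≤ C) :
    |taylorRem2 f x t| ≤ C * (t - x) ^ 2 := by
  set c := deriv (deriv f) x
  have hC0 : 0 ≤ C := (abs_nonneg _).trans (hC x left_mem_uIcc)
  have hlin : ∀ k s : ℝ, HasDerivAt (fun s => k * (s - x)) k s := fun k s => by
    simpa using ((hasDerivAt_id s).sub_const x).const_mul k
  have hquad : ∀ s, HasDerivAt (fun s => c / 2 * (s - x) ^ 2) (c * (s - x)) s := fun s => by
    refine ((((hasDerivAt_id s).sub_const x).pow 2).const_mul (c / 2)).congr_deriv ?_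
    simp only [id]
    ring
  have hderiv' : ∀ s, HasDerivAt (fun s => deriv f s - deriv f x - c * (s - x))
      (deriv (deriv f) s - c) s := fun s =>
    ((hf' s).hasDerivAt.sub_const _).sub (hlin c s)
  have hderiv : ∀ s, HasDerivAt (fun s => f s - f x - deriv f x * (s - x) - c / 2 * (s - x) ^ 2)
      (deriv f s - deriv f x - c * (s - x)) s := fun s =>
    (((hf s).hasDerivAt.sub_const _).sub (hlin _ s)).sub (hquad s)
  have hfirst : ∀ s ∈ uIcc x t, ‖deriv f s - deriv f x - c * (s - x)‖ ≤ C * |t - x| := by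
    intro s hs
    have := (convex_uIcc x t).norm_image_sub_le_of_norm_hasDerivWithin_le
      (fun z _ => (hderiv' z).hasDerivWithinAt) hC left_mem_uIcc hs
    simp only [sub_self, mul_zero, sub_zero, Real.norm_eq_abs] at this
    exact this.trans (mul_le_mul_of_nonneg_left (abs_sub_left_of_mem_uIcc hs) hC0)
  have := (convex_uIcc x t).norm_image_sub_le_of_norm_hasDerivWithin_le
    (fun z _ => (hderiv z).hasDerivWithinAt) hfirst left_mem_uIcc right_mem_uIcc
  simp only [sub_self, mul_zero, sub_zero, ne_eq, OfNat.ofNat_ne_zero, not_false_eq_true,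
    zero_pow, Real.norm_eq_abs] at this
  rwa [mul_assoc, ← abs_mul, ← sq, abs_sq] at this

lemma abs_sub_le_modCont {g : ℝ → ℝ} {I : Set ℝ} (hI : IsCompact I)
    (hg : ContinuousOn (deriv (deriv g)) I) {h s t : ℝ} (hs : s ∈ I) (ht : t ∈ I)
    (hst : |s - t| ≤ h) :
    |deriv (deriv g) s - deriv (deriv g) t| ≤ modCont g I h := by
  obtain ⟨M, hM⟩ := hI.exists_bound_of_continuousOn hg
  refine le_csSup ⟨M + M, ?_⟩ ⟨s, hs, t, ht, hst, rfl⟩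
  rintro q ⟨s, hs, t, ht, -, rfl⟩
  exact (abs_sub _ _).trans (add_le_add (hM s hs) (hM t ht))

lemma abs_taylorRem2_le_modCont {g : ℝ → ℝ} (hg : ContDiff ℝ 2 g) {a b h x t : ℝ}
    (hx : x ∈ Icc a b) (ht : t ∈ Icc a b) (hxt : |x - t| ≤ h) :
    |taylorRem2 g x t| ≤ modCont g (Icc a b) h * h ^ 2 := by
  have hC : ∀ s ∈ uIcc x t, |deriv (deriv g) s - deriv (deriv g) x| ≤ modCont g (Icc a b) h :=
    fun s hs => abs_sub_le_modCont isCompact_Icc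
      (hg.deriv' (n := 1)).continuous_deriv_one.continuousOn (uIcc_subset_Icc hx ht hs) hx
      ((abs_sub_left_of_mem_uIcc hs).trans (by rwa [abs_sub_comm]))
  have hQ : 0 ≤ modCont g (Icc a b) h := (abs_nonneg _).trans (hC x left_mem_uIcc)
  calc _ ≤ modCont g (Icc a b) h * (t - x) ^ 2 :=
        abs_taylorRem2_le (hg.differentiable two_ne_zero) hg.differentiable_deriv_two hC
    _ ≤ modCont g (Icc a b) h * h ^ 2 := by
        refine mul_le_mul_of_nonneg_left ?_ hQ
        rw [← sq_abs, abs_sub_comm]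
        exact pow_le_pow_left₀ (abs_nonneg _) hxt 2

section Kernel

variable {K : ℝ → ℝ} {h : ℝ}

lemma kernScaled_nonneg (hK : ∀ u, 0 ≤ K u) (hh : 0 ≤ h) (u : ℝ) : 0 ≤ kernScaled K h u :=
  div_nonneg (hK _) hh

lemma abs_mul_pow_mul_kernScaled_le (hK : ∀ u, 0 ≤ K u) (hKsupp : ∀ u, 1 < |u| → K u = 0)
    (hh : 0 < h) {u z B : ℝ} (ℓ : ℕ) (hz : |u| ≤ h → |z| ≤ B) :
    |z * ((u / h) ^ ℓ * kernScaled K h u)| ≤ B * kernScaled K h u := by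
  rcases le_or_gt |u / h| 1 with hu | hu
  · have hzB := hz (by rwa [abs_div, abs_of_pos hh, div_le_one hh] at hu)
    have hk := kernScaled_nonneg hK hh.le u
    rw [abs_mul, abs_mul, abs_pow, abs_of_nonneg hk]
    calc |z| * (|u / h| ^ ℓ * kernScaled K h u) ≤ B * (1 * kernScaled K h u) := by
          gcongr
          · exact (abs_nonneg z).trans hzB
          · exact pow_le_one₀ (abs_nonneg _) hu
      _ = B * kernScaled K h u := by rw [one_mul]
  · simp [kernScaled, hKsupp _ hu]

variable {m : ℕ} {X : Fin m → ℝ} {x : ℝ}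

lemma abs_Vstat_le (hK : ∀ u, 0 ≤ K u) (hKsupp : ∀ u, 1 < |u| → K u = 0) (hh : 0 < h)
    {Z : Fin m → ℝ} {B : ℝ} (ℓ : ℕ) (hZ : ∀ i, |x - X i| ≤ h → |Z i| ≤ B) :
    |Vstat K h m X Z ℓ x| ≤ B * Ustat K h m X 0 x := by
  simp only [Vstat, Ustat, pow_zero, one_mul, abs_mul, abs_one_div, Nat.abs_cast]
  rw [mul_left_comm, Finset.mul_sum]
  gcongr
  exact (abs_sum_le_sum_abs _ _).trans
    (sum_le_sum fun i _ => abs_mul_pow_mul_kernScaled_le hK hKsupp hh ℓ (hZ i))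

lemma abs_Ustat_le (hK : ∀ u, 0 ≤ K u) (hKsupp : ∀ u, 1 < |u| → K u = 0) (hh : 0 < h)
    (ℓ : ℕ) : |Ustat K h m X ℓ x| ≤ Ustat K h m X 0 x := by
  have hV : Vstat K h m X 1 ℓ x = Ustat K h m X ℓ x := by simp [Vstat, Ustat]
  simpa [hV] using abs_Vstat_le hK hKsupp hh (X := X) (x := x) (Z := 1) (B := 1) ℓ
    (fun _ _ => by simp)

end Kernel

section Expansion

variable {K : ℝ → ℝ} {h : ℝ} {m : ℕ} {X Y ε : Fin m → ℝ} {g : ℝ → ℝ} {x : ℝ}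

lemma Vstat_eq_taylor (hh : h ≠ 0) (hY : ∀ i, Y i = g (X i) + ε i) (ℓ : ℕ) :
    Vstat K h m X Y ℓ x = g x * Ustat K h m X ℓ x - deriv g x * h * Ustat K h m X (ℓ + 1) x
      + deriv (deriv g) x / 2 * h ^ 2 * Ustat K h m X (ℓ + 2) x
      + Vstat K h m X (fun i => taylorRem2 g x (X i)) ℓ x
      + Dstat K h m X ε ℓ x := by
  simp only [Vstat, Ustat, Dstat, kernScaled, taylorRem2, mul_sum, ← sum_add_distrib, ← sum_sub_distrib]
  refine sum_congr rfl fun i _ => ?_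
  rw [hY i, pow_add, pow_add]
  generalize K ((x - X i) / h) = k
  generalize ((x - X i) / h) ^ ℓ = p
  field_simp
  ring

lemma locLin_sub_expansion_eq (hh : h ≠ 0) (hY : ∀ i, Y i = g (X i) + ε i)
    (hden : Ustat K h m X 2 x * Ustat K h m X 0 x - Ustat K h m X 1 x ^ 2 ≠ 0) :
    locLin K h m X Y x
        - (g x
            + 1 / 2 * h ^ 2 * deriv (deriv g) x *
              ((Ustat K h m X 2 x ^ 2 - Ustat K h m X 1 x * Ustat K h m X 3 x) /
                (Ustat K h m X 2 x * Ustat K h m X 0 x - Ustat K h m X 1 x ^ 2))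
            + DeltaStat K h m X ε x)
      = (Ustat K h m X 2 x * Vstat K h m X (fun i => taylorRem2 g x (X i)) 0 x
          - Ustat K h m X 1 x * Vstat K h m X (fun i => taylorRem2 g x (X i)) 1 x) /
          (Ustat K h m X 2 x * Ustat K h m X 0 x - Ustat K h m X 1 x ^ 2) := by
  unfold locLin DeltaStat
  rw [Vstat_eq_taylor hh hY 0, Vstat_eq_taylor hh hY 1]
  field_simp
  ring

end Expansion

theorem locLin_expansion_general
    (K : ℝ → ℝ) (hKpos : ∀ u, 0 ≤ K u) (hKsupp : ∀ u, 1 < |u| → K u = 0)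
    (h : ℝ) (hh : 0 < h) (m : ℕ) (X Y ε : Fin m → ℝ)
    (g : ℝ → ℝ) (hg : ContDiff ℝ 2 g)
    (hY : ∀ i, Y i = g (X i) + ε i)
    (a b : ℝ) (x : ℝ) (hx : x ∈ Set.Icc a b)
    (hX : ∀ i, X i ∈ Set.Icc a b)
    (hden : 0 < Ustat K h m X 2 x * Ustat K h m X 0 x - (Ustat K h m X 1 x) ^ 2) :
    |locLin K h m X Y x
        - (g x
            + (1 / 2) * h ^ 2 * deriv (deriv g) x *
              ((Ustat K h m X 2 x ^ 2 - Ustat K h m X 1 x * Ustat K h m X 3 x) /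
                (Ustat K h m X 2 x * Ustat K h m X 0 x - (Ustat K h m X 1 x) ^ 2))
            + DeltaStat K h m X ε x)|
      ≤ 2 * modCont g (Set.Icc a b) h * h ^ 2 * (Ustat K h m X 0 x) ^ 2 /
          (Ustat K h m X 2 x * Ustat K h m X 0 x - (Ustat K h m X 1 x) ^ 2) := by
  set Q := modCont g (Icc a b) h
  have hR : ∀ ℓ, |Vstat K h m X (fun i => taylorRem2 g x (X i)) ℓ x|
      ≤ Q * h ^ 2 * Ustat K h m X 0 x :=
    fun ℓ => abs_Vstat_le hKpos hKsupp hh ℓ fun i hi =>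
      abs_taylorRem2_le_modCont hg hx (hX i) hi
  rw [locLin_sub_expansion_eq hh.ne' hY hden.ne', abs_div, abs_of_pos hden,
    div_le_div_iff_of_pos_right hden]
  have hU0 : 0 ≤ Ustat K h m X 0 x :=
    (abs_nonneg _).trans (abs_Ustat_le hKpos hKsupp hh 0)
  calc _ ≤ |Ustat K h m X 2 x| * |_| + |Ustat K h m X 1 x| * |_| := by
        rw [← abs_mul, ← abs_mul]; exact abs_sub _ _
    _ ≤ Ustat K h m X 0 x * (Q * h ^ 2 * Ustat K h m X 0 x)
        + Ustat K h m X 0 x * (Q * h ^ 2 * Ustat K h m X 0 x) := by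
        gcongr <;> first | exact hR _ | exact abs_Ustat_le hKpos hKsupp hh _
    _ = 2 * Q * h ^ 2 * Ustat K h m X 0 x ^ 2 := by ring

/-- Deterministic expansion of the local linear estimator: with `yᵢ = g(xᵢ) + εᵢ`,
a nonnegative kernel supported in `[-1,1]`, design points and `x` in a compact interval
`[a,b]`, and positive denominator `U₂U₀ - U₁² > 0`,
`|ĝ(x) - (g(x) + (1/2) h² g''(x) (U₂² - U₁U₃)/(U₂U₀ - U₁²) + Δ(x))|
   ≤ 2 Q h² U₀(x)² / (U₂U₀ - U₁²)`. -/
theorem locLin_expansion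
    (K : ℝ → ℝ) (hKpos : ∀ u, 0 ≤ K u) (hKsupp : ∀ u, 1 < |u| → K u = 0)
    (h : ℝ) (hh : 0 < h) (m : ℕ) (X Y ε : Fin m → ℝ)
    (g : ℝ → ℝ) (hg : ContDiff ℝ 2 g)
    (hY : ∀ i, Y i = g (X i) + ε i)
    (a b : ℝ) (hab : a ≤ b) (x : ℝ) (hx : x ∈ Set.Icc a b)
    (hX : ∀ i, X i ∈ Set.Icc a b)
    (hden : 0 < Ustat K h m X 2 x * Ustat K h m X 0 x - (Ustat K h m X 1 x) ^ 2) :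
    |locLin K h m X Y x
        - (g x
            + (1 / 2) * h ^ 2 * deriv (deriv g) x *
              ((Ustat K h m X 2 x ^ 2 - Ustat K h m X 1 x * Ustat K h m X 3 x) /
                (Ustat K h m X 2 x * Ustat K h m X 0 x - (Ustat K h m X 1 x) ^ 2))
            + DeltaStat K h m X ε x)|
      ≤ 2 * modCont g (Set.Icc a b) h * h ^ 2 * (Ustat K h m X 0 x) ^ 2 /
          (Ustat K h m X 2 x * Ustat K h m X 0 x - (Ustat K h m X 1 x) ^ 2) :=
  locLin_expansion_general K hKpos hKsupp h hh m X Y ε g hg hY a b x hx hX hden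
end
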